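/- arXiv:0802.3659 — 4 statements merged into one kernel-verified Lean document; each statement's English description precedes it below -/
import Mathlib

section
/- Let (X,d) be a compact metric space, Y ⊆ X nonempty closed, U = {(x,y,t) ∈ X × Y × [0,1] : t > 0}, and Z = {(x,y,t) ∈ X × Y × [0,1] : t·d(x,Y) ≤ 2·d(x,Y) − d(x,y)}. Then the restriction of the first coordinate projection p₁ : U ∩ Z → X, (x,y,t) ↦ x, is an open map onto its image. -/
open Metric

/-- The set `Z = {(x,y,t) ∈ X × Y × [0,1] : t·d(x,Y) ≤ 2·d(x,Y) − d(x,y)}`. -/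
def Zset {X : Type*} [MetricSpace X] (Y : Set X) : Set (X × X × ℝ) :=
  {p | p.2.1 ∈ Y ∧ p.2.2 ∈ Set.Icc (0 : ℝ) 1 ∧
    p.2.2 * infDist p.1 Y ≤ 2 * infDist p.1 Y - dist p.1 p.2.1}

/-- `U ∩ Z`, the part of `Z` with `t > 0`. -/
def UZset {X : Type*} [MetricSpace X] (Y : Set X) : Set (X × X × ℝ) :=
  {p | p ∈ Zset Y ∧ 0 < p.2.2}

open Filter Topology

/-!
Fix `(x₀, y₀, t₀) ∈ U ∩ Z`. The defining inequality reads `d(x, y) ≤ (2 - t)·d(x, Y)`; lowering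
`t₀` slightly to `t` makes the factor `2 - t` strictly larger. If `d(x₀, Y) > 0` the inequality
for `(x₀, y₀, t)` is then strict, hence survives for all `x` near `x₀` with `y = y₀`. If
`d(x₀, Y) = 0` then `y₀ = x₀`, and for `x` near `x₀` a point `y ∈ Y` with
`d(x, y) ≤ (2 - t)·d(x, Y)` lies within `(3 - t)·d(x, x₀)` of `y₀`. Either way the projection of
any neighbourhood of `(x₀, y₀, t₀)` in `U ∩ Z` contains a neighbourhood of `x₀` in `X`.
-/

theorem mem_UZset_iff {X : Type*} [MetricSpace X] {Y : Set X} {x y : X} {t : ℝ} :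
    (x, y, t) ∈ UZset Y ↔ y ∈ Y ∧ 0 < t ∧ t ≤ 1 ∧ dist x y ≤ (2 - t) * infDist x Y := by
  simp only [UZset, Zset, Set.mem_ofPred_eq, Set.mem_Icc]
  constructor
  · rintro ⟨⟨hy, ⟨-, ht1⟩, h⟩, ht0⟩
    exact ⟨hy, ht0, ht1, by linarith⟩
  · rintro ⟨hy, ht0, ht1, h⟩
    exact ⟨⟨hy, ⟨ht0.le, ht1⟩, by linarith⟩, ht0⟩

section InfDist

variable {α : Type*} [PseudoMetricSpace α] {s : Set α}

theorem IsClosed.exists_mem_dist_le_mul_infDist (hs : IsClosed s) (hne : s.Nonempty) {c : ℝ}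
    (hc : 1 < c) (x : α) : ∃ y ∈ s, dist x y ≤ c * infDist x s := by
  rcases (infDist_nonneg (x := x) (s := s)).eq_or_lt with h0 | hpos
  · exact ⟨x, (hs.mem_iff_infDist_zero hne).2 h0.symm, by simp [← h0]⟩
  · obtain ⟨y, hy, hxy⟩ := (infDist_lt_iff hne).1 (lt_mul_left hpos hc)
    exact ⟨y, hy, hxy.le⟩

theorem IsClosed.eventually_exists_mem_near_dist_le_mul_infDist (hs : IsClosed s)
    {x₀ y₀ : α} (hy₀ : y₀ ∈ s) {b c ε : ℝ} (hc : 1 < c) (hbc : b < c)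
    (hb : dist x₀ y₀ ≤ b * infDist x₀ s) (hε : 0 < ε) :
    ∀ᶠ x in 𝓝 x₀, ∃ y ∈ s, dist y y₀ < ε ∧ dist x y ≤ c * infDist x s := by
  rcases (infDist_nonneg (x := x₀) (s := s)).eq_or_lt with h0 | hpos
  · have hx₀ : dist x₀ y₀ = 0 := le_antisymm (by simpa [← h0] using hb) dist_nonneg
    filter_upwards [ball_mem_nhds x₀ (div_pos hε (by linarith : 0 < c + 1))] with x hx
    have hxy₀ : dist x y₀ < ε / (c + 1) :=
      ((dist_triangle x x₀ y₀).trans_eq (by rw [hx₀, add_zero])).trans_lt hx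
    rw [lt_div_iff₀ (by linarith)] at hxy₀
    obtain ⟨y, hy, hxy⟩ := hs.exists_mem_dist_le_mul_infDist ⟨y₀, hy₀⟩ hc x
    have hDx : infDist x s ≤ dist x y₀ := infDist_le_dist_of_mem hy₀
    refine ⟨y, hy, ?_, hxy⟩
    calc dist y y₀ ≤ dist x y + dist x y₀ := dist_triangle_left _ _ _
      _ ≤ c * dist x y₀ + dist x y₀ := by gcongr; exact hxy.trans (by gcongr)
      _ < ε := by linarith
  · have hlt : dist x₀ y₀ < c * infDist x₀ s := hb.trans_lt (by gcongr)
    have hopen : IsOpen {x | dist x y₀ < c * infDist x s} :=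
      isOpen_lt (continuous_id.dist continuous_const)
        (continuous_const.mul (continuous_infDist_pt s))
    filter_upwards [hopen.mem_nhds hlt] with x hx
    exact ⟨y₀, hy₀, by rwa [dist_self], hx.le⟩

end InfDist

theorem eventually_exists_mem_UZset_fst_eq_dist_lt {X : Type*} [MetricSpace X] {Y : Set X}
    (hY : IsClosed Y) {p : X × X × ℝ} (hp : p ∈ UZset Y) {ε : ℝ} (hε : 0 < ε) :
    ∀ᶠ x in 𝓝 p.1, ∃ q ∈ UZset Y, q.1 = x ∧ dist q p < ε := by
  obtain ⟨x₀, y₀, t₀⟩ := p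
  obtain ⟨hy₀, ht₀, ht₀1, hb⟩ := mem_UZset_iff.1 hp
  set δ := min (ε / 2) (t₀ / 2)
  have hδ : 0 < δ := lt_min (by linarith) (by linarith)
  have hδε : δ < ε := (min_le_left _ _).trans_lt (by linarith)
  have hδt : δ ≤ t₀ / 2 := min_le_right _ _
  have hnear := hY.eventually_exists_mem_near_dist_le_mul_infDist hy₀
    (c := 2 - (t₀ - δ)) (by linarith) (by linarith) hb hε
  filter_upwards [hnear, ball_mem_nhds x₀ hε] with x ⟨y, hy, hyy₀, hxy⟩ hx
  refine ⟨(x, y, t₀ - δ), mem_UZset_iff.2 ⟨hy, by linarith, by linarith, hxy⟩, rfl, ?_⟩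
  simpa [Prod.dist_eq, abs_of_pos hδ] using ⟨hx, hyy₀, hδε⟩

theorem isOpen_fst_image_inter_UZset {X : Type*} [MetricSpace X] {Y : Set X} (hY : IsClosed Y)
    {V : Set (X × X × ℝ)} (hV : IsOpen V) : IsOpen (Prod.fst '' (V ∩ UZset Y)) := by
  rw [isOpen_iff_mem_nhds]
  rintro _ ⟨p, ⟨hpV, hp⟩, rfl⟩
  obtain ⟨ε, hε, hball⟩ := isOpen_iff.1 hV p hpV
  filter_upwards [eventually_exists_mem_UZset_fst_eq_dist_lt hY hp hε] with x ⟨q, hq, hqx, hqp⟩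
  exact ⟨q, ⟨hball hqp, hq⟩, hqx⟩

theorem UZset_proj_isOpenMap_onto_image_general {X : Type*} [MetricSpace X]
    (Y : Set X) (hYcl : IsClosed Y) :
    ∀ V : Set (X × X × ℝ), IsOpen V →
      ∃ W : Set X, IsOpen W ∧
        Prod.fst '' (V ∩ UZset Y) = W ∩ (Prod.fst '' UZset Y) := by
  intro V hV
  exact ⟨_, isOpen_fst_image_inter_UZset hYcl hV,
    (Set.inter_eq_left.2 (Set.image_mono Set.inter_subset_right)).symm⟩

/-- The first coordinate projection `p₁ : U ∩ Z → X` is an open map onto its image: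
images of relatively open subsets of `U ∩ Z` are relatively open in `p₁(U ∩ Z)`. -/
theorem UZset_proj_isOpenMap_onto_image {X : Type*} [MetricSpace X] [CompactSpace X]
    (Y : Set X) (hYne : Y.Nonempty) (hYcl : IsClosed Y) :
    ∀ V : Set (X × X × ℝ), IsOpen V →
      ∃ W : Set X, IsOpen W ∧
        Prod.fst '' (V ∩ UZset Y) = W ∩ (Prod.fst '' UZset Y) :=
  UZset_proj_isOpenMap_onto_image_general Y hYcl
end

section
/- Let Y = {0} ∪ {1/n : n ≥ 1}, let A = C(Y) ⊕ C(Y) (continuous ℂ-valued functions), and let B ⊆ A be the subalgebra B = C(Y)·(1,1) + (C₀(Y∖{0}) ⊕ C₀(Y∖{0})), where C₀(Y∖{0}) denotes continuous functions vanishing at 0. Define φ : B → C(Y) by φ(b₁,b₂)(1/n) = b₁(1/n) if n is odd, φ(b₁,b₂)(1/n) = b₂(1/n) if n is even, and φ(f·(1,1) + (c₁,c₂))(0) = f(0) (so φ(b₁,b₂)(0) = b₁(0) = b₂(0)). Then φ is a well-defined unital positive C(Y)-linear map B → C(Y), but there is no unital positive C(Y)-linear map ψ : A → C(Y) with ψ|_B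 = φ. -/
open scoped ComplexOrder
open Filter Topology

/-- The compact space `Y = {0} ∪ {1/n : n ∈ ℕ*} ⊆ ℝ`. -/
def Ysp : Set ℝ := {0} ∪ {x : ℝ | ∃ n : ℕ, 0 < n ∧ x = 1 / n}

/-- The point `0 ∈ Y`. -/
def y0 : Ysp := ⟨0, Or.inl rfl⟩

/-- The point `1/n ∈ Y` for `n ≥ 1`. -/
noncomputable def yn (n : ℕ) (hn : 0 < n) : Ysp := ⟨1 / n, Or.inr ⟨n, hn, rfl⟩⟩

-- uniqueness of index
lemma yn_inj {n m : ℕ} (hn : 0 < n) (hm : 0 < m) (h : (1:ℝ)/n = 1/m) : n = m := by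
  have hn' : (n:ℝ) ≠ 0 := Nat.cast_ne_zero.mpr hn.ne'
  have hm' : (m:ℝ) ≠ 0 := Nat.cast_ne_zero.mpr hm.ne'
  field_simp at h
  exact_mod_cast h.symm

-- isolated points
lemma isolated (n : ℕ) (hn : 0 < n) : IsOpen ({yn n hn} : Set Ysp) := by
  rw [Metric.isOpen_singleton_iff]
  refine ⟨1/(n*(n+1)), by positivity, ?_⟩
  rintro ⟨z, hz | ⟨m, hm, rfl⟩⟩ hd
  · exfalso
    rw [Subtype.dist_eq] at hd
    simp only [Set.mem_singleton_iff] at hz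
    subst hz
    rw [yn] at hd
    simp only [Real.dist_eq] at hd
    have h1 : |0 - 1/(n:ℝ)| = 1/n := by
      rw [abs_sub_comm, sub_zero, abs_of_pos (by positivity)]
    rw [h1] at hd
    have : (1:ℝ)/(n*(n+1)) ≤ 1/n := by
      apply one_div_le_one_div_of_le (by positivity)
      have : (1:ℝ) ≤ n := by exact_mod_cast hn
      nlinarith
    linarith
  · rw [Subtype.dist_eq] at hd
    rw [yn] at hd
    simp only [Real.dist_eq] at hd
    have hnR : (1:ℝ) ≤ n := Nat.one_le_cast.mpr hn
    have hmR : (1:ℝ) ≤ m := Nat.one_le_cast.mpr hm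
    have hmn : m = n := by
      by_contra hne
      rcases lt_or_gt_of_ne hne with hlt | hgt
      · -- m < n : 1/m - 1/n ≥ 1/(mn) ≥ 1/(n(n+1))
        have h1 : (1:ℝ)/(n*(n+1)) ≤ 1/m - 1/n := by
          have hmn' : (m:ℝ) ≤ n := Nat.cast_le.mpr hlt.le
          have h2 : (1:ℝ)/m - 1/n = ((n:ℝ) - m)/(m*n) := by field_simp
          rw [h2]
          rw [div_le_div_iff₀ (by positivity) (by positivity)]
          have hs : (m:ℝ) + 1 ≤ n := by exact_mod_cast Nat.succ_le_of_lt hlt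
          have e1 : (m:ℝ)*n ≤ n*(n+1) := by nlinarith
          have e2 : (n:ℝ)*(n+1) ≤ ((n:ℝ)-m)*(n*(n+1)) := by
            have := mul_le_mul_of_nonneg_right (show (1:ℝ) ≤ (n:ℝ) - m by linarith)
              (show (0:ℝ) ≤ (n:ℝ)*(n+1) by positivity)
            linarith
          linarith
        have hpos : (0:ℝ) < 1/(n*(n+1)) := by positivity
        have habs : |1/(m:ℝ) - 1/n| = 1/m - 1/n := abs_of_nonneg (by linarith)
        linarith
      · -- m > n : 1/n - 1/m ≥ 1/n - 1/(n+1) = 1/(n(n+1))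
        have hm1 : (n:ℝ) + 1 ≤ m := by exact_mod_cast Nat.succ_le_of_lt hgt
        have h1 : (1:ℝ)/m ≤ 1/(n+1) :=
          one_div_le_one_div_of_le (show (0:ℝ) < (n:ℝ)+1 by positivity) hm1
        have h2 : (1:ℝ)/(n*(n+1)) = 1/n - 1/(n+1) := by field_simp; ring
        have habs : |1/(m:ℝ) - 1/n| = 1/n - 1/m := by
          rw [abs_sub_comm]
          apply abs_of_nonneg
          have : (1:ℝ)/m ≤ 1/n := one_div_le_one_div_of_le (by linarith) (by linarith)
          linarith
        linarith
    exact Subtype.ext (by simp [yn, hmn])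

lemma contAt_of_ne (g : Ysp → ℂ) (n : ℕ) (hn : 0 < n) : ContinuousAt g (yn n hn) := by
  rw [ContinuousAt, (isOpen_singleton_iff_nhds_eq_pure _).mp (isolated n hn)]
  exact tendsto_pure_nhds g _

-- every point is y0 or some yn
lemma point_cases (y : Ysp) : y = y0 ∨ ∃ n : ℕ, ∃ hn : 0 < n, y = yn n hn := by
  rcases y with ⟨x, hx | ⟨n, hn, rfl⟩⟩
  · left; simp only [Set.mem_singleton_iff] at hx; subst hx; rfl
  · right; exact ⟨n, hn, rfl⟩

open scoped Classical in
noncomputable def chi : Ysp → ℂ := fun y =>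
  if (y:ℝ) = 0 ∨ ∃ n : ℕ, Odd n ∧ (y:ℝ) = 1/n then 1 else 0

lemma chi_y0 : chi y0 = 1 := by rw [chi, if_pos]; left; rfl

lemma chi_odd (n : ℕ) (hn : 0 < n) (hodd : Odd n) : chi (yn n hn) = 1 := by
  rw [chi, if_pos]; right; exact ⟨n, hodd, rfl⟩

lemma chi_even (n : ℕ) (hn : 0 < n) (heven : Even n) : chi (yn n hn) = 0 := by
  rw [chi, if_neg]
  rintro (h | ⟨m, hm, hme⟩)
  · rw [yn] at h; simp at h
    exact absurd h (by positivity)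
  · rw [yn] at hme; simp only at hme
    have hm0 : 0 < m := hm.pos
    have := yn_inj hn hm0 hme
    subst this
    exact (Nat.not_odd_iff_even.mpr heven) hm

lemma chi_norm (y : Ysp) : ‖chi y‖ ≤ 1 := by
  rw [chi]; split <;> simp

lemma mulchi_cont (c : C(Ysp, ℂ)) (hc : c y0 = 0) :
    Continuous fun y => c y * chi y := by
  rw [continuous_iff_continuousAt]
  intro y
  rcases point_cases y with rfl | ⟨n, hn, rfl⟩
  · have h0 : c y0 * chi y0 = 0 := by rw [hc, zero_mul]
    rw [ContinuousAt, h0]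
    apply squeeze_zero_norm (a := fun y => ‖c y‖)
    · intro z
      calc ‖c z * chi z‖ = ‖c z‖ * ‖chi z‖ := norm_mul _ _
        _ ≤ ‖c z‖ * 1 := by gcongr; exact chi_norm z
        _ = ‖c z‖ := mul_one _
    · have : Tendsto (fun z => ‖c z‖) (𝓝 y0) (𝓝 ‖c y0‖) :=
        (c.continuous.norm).continuousAt
      rwa [hc, norm_zero] at this
  · exact contAt_of_ne _ n hn

noncomputable def mulchi (c : C(Ysp, ℂ)) (hc : c y0 = 0) : C(Ysp, ℂ) :=
  ⟨fun y => c y * chi y, mulchi_cont c hc⟩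

/-- The subalgebra `B = C(Y)·1 + (C₀(Y∖{0}) ⊕ C₀(Y∖{0}))` of `A = C(Y) ⊕ C(Y)`. -/
def Bset : Set (C(Ysp, ℂ) × C(Ysp, ℂ)) :=
  {p | ∃ f c₁ c₂ : C(Ysp, ℂ), c₁ y0 = 0 ∧ c₂ y0 = 0 ∧ p = (f + c₁, f + c₂)}

lemma bsub {p : C(Ysp, ℂ) × C(Ysp, ℂ)} (hp : p ∈ Bset) : (p.1 - p.2) y0 = 0 := by
  obtain ⟨f, c₁, c₂, h1, h2, rfl⟩ := hp
  simp [h1, h2]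

noncomputable def phiMap (b : Bset) : C(Ysp, ℂ) :=
  b.val.2 + mulchi (b.val.1 - b.val.2) (bsub b.property)

lemma phi_apply (b : Bset) (y : Ysp) :
    phiMap b y = b.val.2 y + (b.val.1 y - b.val.2 y) * chi y := rfl

lemma add_sub_key (x z : ℂ) : x + (z - x) * 1 = z := by ring


/-- There is a well-defined unital positive `C(Y)`-linear map `φ : B → C(Y)` given by
`φ(b₁,b₂)(1/n) = b₁(1/n)` for `n` odd, `b₂(1/n)` for `n` even, and
`φ(f·1 + (c₁,c₂))(0) = f(0)`; but there is no unital positive `C(Y)`-linear map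
`ψ : A → C(Y)` agreeing with `φ` on `B`. -/
theorem hahn_banach_counterexample :
    (∃ φ : Bset → C(Ysp, ℂ),
      -- additive
      (∀ b c : Bset, ∀ h : (b : C(Ysp, ℂ) × C(Ysp, ℂ)) + c ∈ Bset,
        φ ⟨(b : C(Ysp, ℂ) × C(Ysp, ℂ)) + c, h⟩ = φ b + φ c) ∧
      -- C(Y)-linear
      (∀ f : C(Ysp, ℂ), ∀ b : Bset,
        ∀ h : (f * (b : C(Ysp, ℂ) × C(Ysp, ℂ)).1, f * (b : C(Ysp, ℂ) × C(Ysp, ℂ)).2) ∈ Bset,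
        φ ⟨(f * (b : C(Ysp, ℂ) × C(Ysp, ℂ)).1, f * (b : C(Ysp, ℂ) × C(Ysp, ℂ)).2), h⟩
          = f * φ b) ∧
      -- unital
      (∀ h : ((1, 1) : C(Ysp, ℂ) × C(Ysp, ℂ)) ∈ Bset, φ ⟨(1, 1), h⟩ = 1) ∧
      -- positive
      (∀ b : Bset, 0 ≤ (b : C(Ysp, ℂ) × C(Ysp, ℂ)).1 →
        0 ≤ (b : C(Ysp, ℂ) × C(Ysp, ℂ)).2 → 0 ≤ φ b) ∧
      -- the defining point formulas
      (∀ b : Bset, ∀ n : ℕ, ∀ hn : 0 < n,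
        (Odd n → φ b (yn n hn) = (b : C(Ysp, ℂ) × C(Ysp, ℂ)).1 (yn n hn)) ∧
        (Even n → φ b (yn n hn) = (b : C(Ysp, ℂ) × C(Ysp, ℂ)).2 (yn n hn))) ∧
      (∀ b : Bset, ∀ f c₁ c₂ : C(Ysp, ℂ), c₁ y0 = 0 → c₂ y0 = 0 →
        (b : C(Ysp, ℂ) × C(Ysp, ℂ)) = (f + c₁, f + c₂) → φ b y0 = f y0)) ∧
    -- ... but no globally defined ψ restricts to φ on B :
    (∀ ψ : C(Ysp, ℂ) × C(Ysp, ℂ) → C(Ysp, ℂ),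
      (∀ a b : C(Ysp, ℂ) × C(Ysp, ℂ), ψ (a + b) = ψ a + ψ b) →
      (∀ f : C(Ysp, ℂ), ∀ a : C(Ysp, ℂ) × C(Ysp, ℂ), ψ (f * a.1, f * a.2) = f * ψ a) →
      ψ (1, 1) = 1 →
      (∀ a : C(Ysp, ℂ) × C(Ysp, ℂ), 0 ≤ a.1 → 0 ≤ a.2 → 0 ≤ ψ a) →
      ¬ (∀ b ∈ Bset, ∀ n : ℕ, ∀ hn : 0 < n,
          (Odd n → ψ b (yn n hn) = b.1 (yn n hn)) ∧
          (Even n → ψ b (yn n hn) = b.2 (yn n hn)))) := by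
  constructor
  · refine ⟨phiMap, ?_, ?_, ?_, ?_, ?_, ?_⟩
    · intro b c h
      ext y
      simp only [phi_apply, ContinuousMap.add_apply, Prod.fst_add, Prod.snd_add]
      ring
    · intro f b h
      ext y
      simp only [phi_apply, ContinuousMap.mul_apply, ContinuousMap.add_apply]
      ring
    · intro h
      ext y
      simp only [phi_apply, ContinuousMap.one_apply]
      ring
    · intro b h1 h2
      rw [ContinuousMap.le_def]
      intro y
      have hy1 := ContinuousMap.le_def.mp h1 y
      have hy2 := ContinuousMap.le_def.mp h2 y
      rw [ContinuousMap.zero_apply] at hy1 hy2 ⊢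
      rcases point_cases y with rfl | ⟨n, hn, rfl⟩
      · rw [phi_apply, chi_y0, add_sub_key]; exact hy1
      · rcases Nat.even_or_odd n with he | ho
        · rw [phi_apply, chi_even n hn he, mul_zero, add_zero]; exact hy2
        · rw [phi_apply, chi_odd n hn ho, add_sub_key]; exact hy1
    · intro b n hn
      constructor
      · intro ho; rw [phi_apply, chi_odd n hn ho, add_sub_key]
      · intro he; rw [phi_apply, chi_even n hn he, mul_zero, add_zero]
    · intro b f c₁ c₂ h1 h2 hb
      have hb1 : (b : C(Ysp, ℂ) × C(Ysp, ℂ)).1 y0 = f y0 := by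
        rw [hb]; simp [h1]
      rw [phi_apply, chi_y0, add_sub_key, hb1]
  · intro ψ hadd hlin hone hpos hres
    have key : ∀ n : ℕ, ∀ hn : 0 < n,
        (Odd n → ψ (1, 0) (yn n hn) = 1) ∧ (Even n → ψ (1, 0) (yn n hn) = 0) := by
      intro n hn
      have hnC : (n : ℂ) ≠ 0 := Nat.cast_ne_zero.mpr hn.ne'
      set c : C(Ysp, ℂ) := ⟨fun y => (n : ℂ) * ((y : ℝ) : ℂ),
        continuous_const.mul (Complex.continuous_ofReal.comp continuous_subtype_val)⟩ with hc
      have hc0 : c y0 = 0 := by simp [hc, y0]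
      have hcn : c (yn n hn) = 1 := by
        simp only [hc, ContinuousMap.coe_mk, yn]
        push_cast
        field_simp
      have hmem : ((c, 0) : C(Ysp, ℂ) × C(Ysp, ℂ)) ∈ Bset :=
        ⟨0, c, 0, hc0, rfl, by simp⟩
      have hψc : ψ (c, 0) = c * ψ (1, 0) := by
        have h := hlin c ((1, 0) : C(Ysp, ℂ) × C(Ysp, ℂ))
        simpa using h
      have h1 := hres (c, 0) hmem n hn
      constructor
      · intro ho
        have h2 := h1.1 ho
        rw [hψc, ContinuousMap.mul_apply, hcn, one_mul] at h2
        exact h2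
      · intro he
        have h2 := h1.2 he
        rw [hψc, ContinuousMap.mul_apply, hcn, one_mul] at h2
        simpa using h2
    set g := ψ (1, 0) with hg
    set s : ℕ → Ysp := fun k => yn (k + 1) (Nat.succ_pos k) with hs
    have hstend : Filter.Tendsto s Filter.atTop (nhds y0) := by
      rw [tendsto_subtype_rng]
      have : (fun k : ℕ => ((s k : Ysp) : ℝ)) = fun k : ℕ => 1 / ((k : ℝ) + 1) := by
        funext k; simp [hs, yn]
      rw [this]
      exact tendsto_one_div_add_atTop_nhds_zero_nat
    have hcont : Filter.Tendsto (fun k => g (s k)) Filter.atTop (nhds (g y0)) :=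
      (g.continuous.tendsto y0).comp hstend
    have e1 : g y0 = 1 := by
      have ht : Filter.Tendsto (fun k : ℕ => 2 * k) Filter.atTop Filter.atTop :=
        Filter.tendsto_atTop_mono (fun k => by simp only [id_eq]; omega) Filter.tendsto_id
      have h2 : Filter.Tendsto (fun k => g (s (2 * k))) Filter.atTop (nhds (g y0)) :=
        hcont.comp ht
      have hconst : (fun k : ℕ => g (s (2 * k))) = fun _ => (1 : ℂ) := by
        funext k
        exact (key (2 * k + 1) (Nat.succ_pos _)).1 (Nat.odd_iff.mpr (by omega))
      rw [hconst] at h2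
      exact tendsto_nhds_unique h2 tendsto_const_nhds
    have e0 : g y0 = 0 := by
      have ht : Filter.Tendsto (fun k : ℕ => 2 * k + 1) Filter.atTop Filter.atTop :=
        Filter.tendsto_atTop_mono (fun k => by simp only [id_eq]; omega) Filter.tendsto_id
      have h2 : Filter.Tendsto (fun k => g (s (2 * k + 1))) Filter.atTop (nhds (g y0)) :=
        hcont.comp ht
      have hconst : (fun k : ℕ => g (s (2 * k + 1))) = fun _ => (0 : ℂ) := by
        funext k
        exact (key (2 * k + 2) (Nat.succ_pos _)).2 (Nat.even_iff.mpr (by omega))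
      rw [hconst] at h2
      exact tendsto_nhds_unique h2 tendsto_const_nhds
    exact one_ne_zero (e1.symm.trans e0)
end

section
/- Let X be a compact Hausdorff space, A a C*-algebra equipped with a unital *-homomorphism from C(X) into the center of the multiplier algebra of A (a C(X)-algebra structure), and for x ∈ X let C₀(X∖{x}) denote continuous functions vanishing at x. Then for every a ∈ A, the function x ↦ ‖a + C₀(X∖{x})·A‖ (the norm of the image of a in the quotient A/(C₀(X∖{x})·A)) is upper semicontinuous on X. -/
/-! Distances to `fibreIdeal Φ x` may be measured to the unclosed span of the products
`Φ f c` with `f x = 0`. Such a product lies within `‖f y‖ * ‖c‖` of the span at `y`, witnessed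
by `Φ (f - f y) c`, and this bound tends to `0` as `y → x`. The distance to a subspace is a
seminorm, so the same convergence holds for every `b` in the span at `x`; choosing `b` close to
`a` then bounds the distance from `a` to the fibre ideals near `x`. -/

open Metric
open scoped MultiplierAlgebra

/-- The closed ideal `C₀(X∖{x})·A` of a `C(X)`-algebra `A`, where the `C(X)`-structure is
given by a unital *-homomorphism `Φ : C(X) → M(A)` with central range. -/
def fibreIdeal {X : Type*} [TopologicalSpace X] [CompactSpace X] [T2Space X]
    {A : Type*} [NonUnitalNormedRing A] [StarRing A] [CStarRing A]
    [NormedSpace ℂ A] [SMulCommClass ℂ A A] [IsScalarTower ℂ A A] [StarModule ℂ A]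
    [NormedStarGroup A]
    (Φ : C(X, ℂ) →⋆ₐ[ℂ] 𝓜(ℂ, A)) (x : X) : Set A :=
  closure (Submodule.span ℂ
    {b : A | ∃ (f : C(X, ℂ)) (c : A), f x = 0 ∧ b = (Φ f).toProd.1 c} : Set A)

open Filter Topology

theorem AddSubgroup.infDist_add_le {E : Type*} [SeminormedAddCommGroup E] (S : AddSubgroup E)
    (b c : E) : infDist (b + c) S ≤ infDist b S + infDist c S := by
  simpa only [← QuotientAddGroup.mk_add, QuotientAddGroup.norm_mk] using
    norm_add_le (b : E ⧸ S) (c : E ⧸ S)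

namespace Submodule

variable {𝕜 E : Type*} [NormedField 𝕜] [SeminormedAddCommGroup E] [NormedSpace 𝕜 E]

theorem infDist_smul (S : Submodule 𝕜 E) (r : 𝕜) (b : E) :
    infDist (r • b) S = ‖r‖ * infDist b S := by
  have hmk (v : E) : infDist v S = ‖Submodule.Quotient.mk (p := S) v‖ :=
    (QuotientAddGroup.norm_mk (S := S.toAddSubgroup) v).symm
  rw [hmk, hmk, Submodule.Quotient.mk_smul, norm_smul]

theorem tendsto_infDist_zero_of_mem_span {Y : Type*} {l : Filter Y} {T : Y → Submodule 𝕜 E}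
    {G : Set E} (hG : ∀ g ∈ G, Tendsto (fun y => infDist g (T y : Set E)) l (𝓝 0))
    {b : E} (hb : b ∈ span 𝕜 G) : Tendsto (fun y => infDist b (T y : Set E)) l (𝓝 0) := by
  induction hb using span_induction with
  | mem g hg => exact hG g hg
  | zero => simpa only [infDist_zero_of_mem (zero_mem _)] using tendsto_const_nhds
  | add b c _ _ hb hc =>
    have hsum := hb.add hc
    rw [add_zero] at hsum
    exact squeeze_zero (fun _ => infDist_nonneg)
      (fun y => (T y).toAddSubgroup.infDist_add_le b c) hsum
  | smul r b _ hb =>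
    simpa only [infDist_smul, mul_zero] using hb.const_mul ‖r‖

end Submodule

theorem upperSemicontinuous_infDist_of_tendsto {X E : Type*} [TopologicalSpace X]
    [PseudoMetricSpace E] {S : X → Set E} (hne : ∀ x, (S x).Nonempty)
    (hS : ∀ x, ∀ b ∈ S x, Tendsto (fun y => infDist b (S y)) (𝓝 x) (𝓝 0)) (a : E) :
    UpperSemicontinuous fun x => infDist a (S x) := by
  intro x C hC
  obtain ⟨b, hb, hab⟩ := (infDist_lt_iff (hne x)).1 hC
  filter_upwards [(hS x b hb).eventually_lt_const (sub_pos.2 hab)] with y hy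
  calc infDist a (S y) ≤ infDist b (S y) + dist a b := infDist_le_infDist_add_dist
    _ < C := by linarith

section FibreSpan

variable {X : Type*} [TopologicalSpace X]
    {A : Type*} [NonUnitalNormedRing A] [StarRing A]
    [NormedSpace ℂ A] [SMulCommClass ℂ A A] [IsScalarTower ℂ A A] [StarModule ℂ A]
    [NormedStarGroup A]
    (Φ : C(X, ℂ) →⋆ₐ[ℂ] 𝓜(ℂ, A))

def fibreSpan (x : X) : Submodule ℂ A :=
  Submodule.span ℂ {b : A | ∃ (f : C(X, ℂ)) (c : A), f x = 0 ∧ b = (Φ f).toProd.1 c}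

theorem infDist_fibreSpan_le (f : C(X, ℂ)) (c : A) (y : X) :
    infDist ((Φ f).toProd.1 c) (fibreSpan Φ y : Set A) ≤ ‖f y‖ * ‖c‖ := by
  set g : C(X, ℂ) := f - f y • 1
  have hg : (Φ g).toProd.1 c ∈ fibreSpan Φ y :=
    Submodule.subset_span ⟨g, c, by simp [g], rfl⟩
  have hdiff : (Φ f).toProd.1 c - (Φ g).toProd.1 c = f y • c := by
    simp [g, DoubleCentralizer.sub_toProd, DoubleCentralizer.smul_toProd]
  calc infDist ((Φ f).toProd.1 c) (fibreSpan Φ y : Set A)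
      ≤ dist ((Φ f).toProd.1 c) ((Φ g).toProd.1 c) := infDist_le_dist_of_mem hg
    _ = ‖f y‖ * ‖c‖ := by rw [dist_eq_norm, hdiff, norm_smul]

theorem tendsto_infDist_fibreSpan {x : X} {b : A} (hb : b ∈ fibreSpan Φ x) :
    Tendsto (fun y => infDist b (fibreSpan Φ y : Set A)) (𝓝 x) (𝓝 0) := by
  refine Submodule.tendsto_infDist_zero_of_mem_span ?_ hb
  rintro _ ⟨f, c, hfx, rfl⟩
  have hbound : Tendsto (fun y => ‖f y‖ * ‖c‖) (𝓝 x) (𝓝 0) := by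
    simpa only [hfx, norm_zero, zero_mul] using
      (f.continuous.tendsto x).norm.mul_const ‖c‖
  exact squeeze_zero (fun _ => infDist_nonneg) (infDist_fibreSpan_le Φ f c) hbound

end FibreSpan

theorem norm_fibre_upperSemicontinuous_general {X : Type*}
    [TopologicalSpace X] [CompactSpace X] [T2Space X]
    {A : Type*} [NonUnitalNormedRing A] [StarRing A] [CStarRing A]
    [NormedSpace ℂ A] [SMulCommClass ℂ A A] [IsScalarTower ℂ A A] [StarModule ℂ A]
    [NormedStarGroup A]
    (Φ : C(X, ℂ) →⋆ₐ[ℂ] 𝓜(ℂ, A))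
    (a : A) :
    UpperSemicontinuous (fun x : X => infDist a (fibreIdeal Φ x)) := by
  have hclosure : ∀ x, infDist a (fibreIdeal Φ x) = infDist a (fibreSpan Φ x : Set A) :=
    fun _ => infDist_closure
  simp only [hclosure]
  exact upperSemicontinuous_infDist_of_tendsto (fun x => ⟨0, zero_mem _⟩)
    (fun _ _ => tendsto_infDist_fibreSpan Φ) a

/-- For a `C(X)`-algebra `A` and `a ∈ A`, the map `x ↦ ‖π_x(a)‖` (the quotient norm of the
image of `a` in `A/(C₀(X∖{x})·A)`, i.e. the distance from `a` to that ideal) is upper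
semicontinuous. -/
theorem norm_fibre_upperSemicontinuous {X : Type*}
    [TopologicalSpace X] [CompactSpace X] [T2Space X]
    {A : Type*} [NonUnitalNormedRing A] [StarRing A] [CStarRing A]
    [NormedSpace ℂ A] [SMulCommClass ℂ A A] [IsScalarTower ℂ A A] [StarModule ℂ A]
    [NormedStarGroup A]
    (Φ : C(X, ℂ) →⋆ₐ[ℂ] 𝓜(ℂ, A))
    (hcentral : ∀ f : C(X, ℂ), Φ f ∈ Set.center 𝓜(ℂ, A))
    (a : A) :
    UpperSemicontinuous (fun x : X => infDist a (fibreIdeal Φ x)) :=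
  norm_fibre_upperSemicontinuous_general Φ a
end

section
/- Let X be a compact Hausdorff space, A a C(X)-algebra, a ∈ A, and x ∈ X. Then ‖π_x(a)‖ = inf{‖(1 − f + f(x))·a‖ : f ∈ C(X)}, where π_x : A → A/(C₀(X∖{x})·A) is the quotient map and 1 − f + f(x) acts via the multiplier structure. -/
/-!
For `f(x) = 0` and `d > 0` the function `e = d / (d + |f|)` satisfies `e(x) = 1`, `‖e‖ ≤ 1` and
`‖e f‖ ≤ d`, so `e·(f·c)` is small; products of such functions handle sums, and density handles
the closure. Hence for every `j` in the ideal and `δ > 0` there is `e` with `e(x) = 1`, `‖e‖ ≤ 1`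
and `‖e·a‖ ≤ ‖a - j‖ + δ`, and `f = 1 - e` bounds the infimum by the quotient norm. Conversely
`f·a - f(x)·a` lies in the ideal.

The estimate `‖e·b‖ ≤ ‖e‖ ‖b‖` needs `Φ` to be contractive. Since `𝓜(A)` need not be complete,
spectral theory is unavailable there; instead a self-adjoint `u` is written as the real part of
`w` with `star w * w = ‖u‖²`, and the C⋆-identity reduces the general case to `star f * f`.
-/

open Metric
open scoped MultiplierAlgebra

namespace ContinuousMap

variable {X : Type*} [TopologicalSpace X] [CompactSpace X]

lemma exists_star_mul_self_eq_and_star_add_self_eq {u : C(X, ℂ)} (hu : IsSelfAdjoint u) :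
    ∃ w : C(X, ℂ), star w * w = ((‖u‖ ^ 2 : ℝ) : ℂ) • 1 ∧ star w + w = (2 : ℂ) • u := by
  let r : X → ℝ := fun s => √(‖u‖ ^ 2 - ‖u s‖ ^ 2)
  refine ⟨⟨fun s => u s + Complex.I * r s, by fun_prop⟩, ?_, ?_⟩ <;> ext s <;>
    obtain ⟨a, ha⟩ : ∃ a : ℝ, u s = a :=
      ⟨_, (Complex.conj_eq_iff_re.1 (congrFun (congrArg DFunLike.coe hu) s)).symm⟩ <;>
    simp only [mul_apply, add_apply, star_apply, coe_mk, smul_apply, one_apply, ha,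
      Complex.star_def, map_add, map_mul, Complex.conj_ofReal, Complex.conj_I, smul_eq_mul]
  · have hr : (r s : ℂ) ^ 2 = ((‖u‖ ^ 2 : ℝ) : ℂ) - a ^ 2 := by
      have := u.norm_coe_le_norm s
      rw [← Complex.ofReal_pow, Real.sq_sqrt (by nlinarith [norm_nonneg (u s)]), ha,
        Complex.norm_real, Real.norm_eq_abs, sq_abs]
      push_cast
      ring
    linear_combination hr - (r s : ℂ) ^ 2 * Complex.I_sq
  · ring

lemma exists_norm_le_one_norm_mul_le (f : C(X, ℂ)) {d : ℝ} (hd : 0 < d) :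
    ∃ e : C(X, ℂ), ‖e‖ ≤ 1 ∧ ‖e * f‖ ≤ d ∧ ∀ s, f s = 0 → e s = 1 := by
  have hpos (s : X) : 0 < d + ‖f s‖ := by positivity
  refine ⟨⟨fun s => ((d / (d + ‖f s‖) : ℝ) : ℂ), by
    fun_prop (disch := exact fun s => (hpos s).ne')⟩, ?_, ?_, fun s hs => by simp [hs, hd.ne']⟩
  · refine (norm_le _ zero_le_one).2 fun s => ?_
    rw [coe_mk, Complex.norm_real, Real.norm_of_nonneg (by positivity),
      div_le_one (hpos s)]
    linarith [norm_nonneg (f s)]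
  · refine (norm_le _ hd.le).2 fun s => ?_
    rw [mul_apply, coe_mk, norm_mul, Complex.norm_real, Real.norm_of_nonneg (by positivity),
      div_mul_eq_mul_div, div_le_iff₀ (hpos s)]
    nlinarith [norm_nonneg (f s)]

end ContinuousMap

section

variable {B : Type*} [NormedRing B] [StarRing B] [CStarRing B] [NormedAlgebra ℂ B]

lemma CStarRing.norm_le_of_star_mul_self_eq {b : B} {r : ℝ} (hr : 0 ≤ r)
    (hb : star b * b = ((r ^ 2 : ℝ) : ℂ) • 1) : ‖b‖ ≤ r := by
  have hone : ‖(1 : B)‖ ≤ 1 := by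
    have := CStarRing.norm_star_mul_self (x := (1 : B))
    rw [star_one, one_mul] at this
    nlinarith [norm_nonneg (1 : B)]
  have : ‖b‖ * ‖b‖ ≤ r * r := by
    rw [← CStarRing.norm_star_mul_self, hb, norm_smul, Complex.norm_real,
      Real.norm_of_nonneg (by positivity)]
    nlinarith
  exact (mul_self_le_mul_self_iff (norm_nonneg b) hr).2 this

namespace StarAlgHom

variable {X : Type*} [TopologicalSpace X] [CompactSpace X]

lemma norm_apply_le_of_isSelfAdjoint (Φ : C(X, ℂ) →⋆ₐ[ℂ] B) {u : C(X, ℂ)}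
    (hu : IsSelfAdjoint u) : ‖Φ u‖ ≤ ‖u‖ := by
  obtain ⟨w, hww, hw⟩ := ContinuousMap.exists_star_mul_self_eq_and_star_add_self_eq hu
  have hΦw : ‖Φ w‖ ≤ ‖u‖ := CStarRing.norm_le_of_star_mul_self_eq (norm_nonneg u) <| by
    rw [← map_star, ← map_mul, hww, map_smul, map_one]
  have hΦu : Φ u = (2⁻¹ : ℂ) • (star (Φ w) + Φ w) := by
    rw [← map_star, ← map_add, hw, map_smul, smul_smul, inv_mul_cancel₀ two_ne_zero, one_smul]
  calc ‖Φ u‖ ≤ ‖(2⁻¹ : ℂ)‖ * (‖star (Φ w)‖ + ‖Φ w‖) := by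
        rw [hΦu, norm_smul]; gcongr; exact norm_add_le _ _
    _ ≤ ‖u‖ := by rw [norm_star, norm_inv, Complex.norm_two]; linarith

lemma norm_apply_le (Φ : C(X, ℂ) →⋆ₐ[ℂ] B) (f : C(X, ℂ)) : ‖Φ f‖ ≤ ‖f‖ := by
  have : ‖Φ f‖ * ‖Φ f‖ ≤ ‖f‖ * ‖f‖ := by
    simp_rw [← CStarRing.norm_star_mul_self, ← map_star, ← map_mul]
    exact Φ.norm_apply_le_of_isSelfAdjoint (.star_mul_self f)
  exact (mul_self_le_mul_self_iff (norm_nonneg _) (norm_nonneg f)).2 this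

end StarAlgHom

end

lemma DoubleCentralizer.norm_fst_apply_le {𝕜 A : Type*} [NontriviallyNormedField 𝕜]
    [NonUnitalNormedRing A] [NormedSpace 𝕜 A] [SMulCommClass 𝕜 A A] [IsScalarTower 𝕜 A A]
    [StarRing A] [CStarRing A] (m : 𝓜(𝕜, A)) (b : A) : ‖m.fst b‖ ≤ ‖m‖ * ‖b‖ :=
  norm_fst m ▸ m.fst.le_opNorm b

lemma DoubleCentralizer.mul_fst_apply {𝕜 A : Type*} [NontriviallyNormedField 𝕜]
    [NonUnitalNormedRing A] [NormedSpace 𝕜 A] [SMulCommClass 𝕜 A A] [IsScalarTower 𝕜 A A]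
    (m n : 𝓜(𝕜, A)) (b : A) : (m * n).fst b = m.fst (n.fst b) := by
  rw [mul_fst]
  rfl

section CAlgebra

variable {X : Type*} [TopologicalSpace X] [CompactSpace X]
  {A : Type*} [NonUnitalNormedRing A] [StarRing A] [CStarRing A]
  [NormedSpace ℂ A] [SMulCommClass ℂ A A] [IsScalarTower ℂ A A] [StarModule ℂ A]
  [NormedStarGroup A] (Φ : C(X, ℂ) →⋆ₐ[ℂ] 𝓜(ℂ, A))

lemma norm_fst_map_apply_le (f : C(X, ℂ)) (b : A) : ‖(Φ f).fst b‖ ≤ ‖f‖ * ‖b‖ :=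
  (DoubleCentralizer.norm_fst_apply_le _ b).trans <| by
    gcongr; exact Φ.norm_apply_le f

lemma norm_fst_map_apply_le_of_norm_le_one {e : C(X, ℂ)} (he : ‖e‖ ≤ 1) (b : A) :
    ‖(Φ e).fst b‖ ≤ ‖b‖ :=
  (norm_fst_map_apply_le Φ e b).trans (mul_le_of_le_one_left (norm_nonneg b) he)

def approxNullAt (x : X) : Submodule ℂ A where
  carrier := {j | ∀ δ > 0, ∃ e : C(X, ℂ), e x = 1 ∧ ‖e‖ ≤ 1 ∧ ‖(Φ e).fst j‖ < δ}
  zero_mem' δ hδ := ⟨1, rfl, (ContinuousMap.norm_le _ zero_le_one).2 fun _ => by simp,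
    by simpa using hδ⟩
  add_mem' {y z} hy hz δ hδ := by
    obtain ⟨e₁, he₁x, he₁, hy⟩ := hy (δ / 2) (half_pos hδ)
    obtain ⟨e₂, he₂x, he₂, hz⟩ := hz (δ / 2) (half_pos hδ)
    refine ⟨e₁ * e₂, by simp [he₁x, he₂x],
      (norm_mul_le _ _).trans (mul_le_one₀ he₁ (norm_nonneg _) he₂), ?_⟩
    calc ‖(Φ (e₁ * e₂)).fst (y + z)‖
        = ‖(Φ e₂).fst ((Φ e₁).fst y) + (Φ e₁).fst ((Φ e₂).fst z)‖ := by
          rw [← DoubleCentralizer.mul_fst_apply, ← DoubleCentralizer.mul_fst_apply, ← map_mul,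
            ← map_mul, mul_comm e₂ e₁, map_add]
      _ ≤ ‖(Φ e₂).fst ((Φ e₁).fst y)‖ + ‖(Φ e₁).fst ((Φ e₂).fst z)‖ := norm_add_le _ _
      _ ≤ ‖(Φ e₁).fst y‖ + ‖(Φ e₂).fst z‖ := by
          gcongr
          · exact norm_fst_map_apply_le_of_norm_le_one Φ he₂ _
          · exact norm_fst_map_apply_le_of_norm_le_one Φ he₁ _
      _ < δ := by linarith
  smul_mem' c j hj δ hδ := by
    obtain ⟨e, hex, he, hj⟩ := hj (δ / (‖c‖ + 1)) (by positivity)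
    refine ⟨e, hex, he, ?_⟩
    rw [map_smul, norm_smul]
    calc ‖c‖ * ‖(Φ e).fst j‖ ≤ (‖c‖ + 1) * ‖(Φ e).fst j‖ := by gcongr; linarith
      _ < δ := by rwa [lt_div_iff₀' (by positivity)] at hj

lemma fst_map_apply_mem_approxNullAt {x : X} {f : C(X, ℂ)} (hfx : f x = 0) (c : A) :
    (Φ f).fst c ∈ approxNullAt Φ x := by
  intro δ hδ
  obtain ⟨e, he, hef, hex⟩ :=
    f.exists_norm_le_one_norm_mul_le (d := δ / (‖c‖ + 1)) (by positivity)
  refine ⟨e, hex x hfx, he, ?_⟩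
  rw [← DoubleCentralizer.mul_fst_apply, ← map_mul]
  calc ‖(Φ (e * f)).fst c‖ ≤ δ / (‖c‖ + 1) * ‖c‖ :=
        (norm_fst_map_apply_le Φ _ c).trans (by gcongr)
    _ < δ := by rw [div_mul_eq_mul_div, div_lt_iff₀ (by positivity)]; nlinarith

variable [T2Space X]

lemma fibreIdeal_subset_approxNullAt (x : X) : fibreIdeal Φ x ⊆ approxNullAt Φ x := by
  intro j hj δ hδ
  obtain ⟨j', hj', hjj'⟩ := Metric.mem_closure_iff.1 hj (δ / 2) (half_pos hδ)
  have hspan : Submodule.span ℂ {b : A | ∃ (f : C(X, ℂ)) (c : A), f x = 0 ∧ b = (Φ f).fst c}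
      ≤ approxNullAt Φ x := by
    rw [Submodule.span_le]
    rintro _ ⟨f, c, hfx, rfl⟩
    exact fst_map_apply_mem_approxNullAt Φ hfx c
  obtain ⟨e, hex, he, hej'⟩ := hspan hj' (δ / 2) (half_pos hδ)
  refine ⟨e, hex, he, ?_⟩
  calc ‖(Φ e).fst j‖ ≤ ‖(Φ e).fst (j - j')‖ + ‖(Φ e).fst j'‖ := by
        rw [map_sub]; exact norm_le_norm_sub_add _ _
    _ ≤ dist j j' + ‖(Φ e).fst j'‖ := by
        gcongr
        exact dist_eq_norm j j' ▸ norm_fst_map_apply_le_of_norm_le_one Φ he _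
    _ < δ := by linarith

lemma fst_map_sub_smul_mem_fibreIdeal (f : C(X, ℂ)) (a : A) (x : X) :
    (Φ f).fst a - f x • a ∈ fibreIdeal Φ x := by
  refine subset_closure (Submodule.subset_span ⟨f - algebraMap ℂ _ (f x), a, by simp, ?_⟩)
  rw [map_sub, AlgHomClass.commutes, DoubleCentralizer.sub_fst, DoubleCentralizer.algebraMap_fst]
  rfl

end CAlgebra

theorem norm_fibre_eq_inf_general {X : Type*}
    [TopologicalSpace X] [CompactSpace X] [T2Space X]
    {A : Type*} [NonUnitalNormedRing A] [StarRing A] [CStarRing A]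
    [NormedSpace ℂ A] [SMulCommClass ℂ A A] [IsScalarTower ℂ A A] [StarModule ℂ A]
    [NormedStarGroup A]
    (Φ : C(X, ℂ) →⋆ₐ[ℂ] 𝓜(ℂ, A))
    (a : A) (x : X) :
    infDist a (fibreIdeal Φ x) =
      sInf (Set.range fun f : C(X, ℂ) => ‖a - (Φ f).toProd.1 a + f x • a‖) := by
  refine le_antisymm (le_csInf (Set.range_nonempty _) ?_) ?_
  · rintro _ ⟨f, rfl⟩
    refine (infDist_le_dist_of_mem (fst_map_sub_smul_mem_fibreIdeal Φ f a x)).trans_eq ?_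
    rw [dist_eq_norm, sub_sub_eq_add_sub, add_sub_right_comm]
  refine (le_infDist ⟨0, subset_closure (Submodule.zero_mem _)⟩).2 fun j hj =>
    le_of_forall_pos_lt_add fun δ hδ => ?_
  obtain ⟨e, hex, he, hej⟩ := fibreIdeal_subset_approxNullAt Φ x hj δ hδ
  have hinf : sInf (Set.range fun f : C(X, ℂ) => ‖a - (Φ f).fst a + f x • a‖) ≤
      ‖(Φ e).fst a‖ := by
    refine csInf_le ⟨0, by rintro _ ⟨f, rfl⟩; positivity⟩ ⟨1 - e, ?_⟩
    simp [hex]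
  calc _ ≤ ‖(Φ e).fst (a - j)‖ + ‖(Φ e).fst j‖ :=
        hinf.trans (by rw [map_sub]; exact norm_le_norm_sub_add _ _)
    _ < dist a j + δ := dist_eq_norm a j ▸
        add_lt_add_of_le_of_lt (norm_fst_map_apply_le_of_norm_le_one Φ he _) hej

/-- `‖π_x(a)‖ = inf {‖(1 − f + f(x))·a‖ : f ∈ C(X)}`: the quotient norm of the image of `a`
in `A/(C₀(X∖{x})·A)` equals the infimum of the norms `‖a − f·a + f(x)·a‖` over `f ∈ C(X)`. -/
theorem norm_fibre_eq_inf {X : Type*}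
    [TopologicalSpace X] [CompactSpace X] [T2Space X]
    {A : Type*} [NonUnitalNormedRing A] [StarRing A] [CStarRing A]
    [NormedSpace ℂ A] [SMulCommClass ℂ A A] [IsScalarTower ℂ A A] [StarModule ℂ A]
    [NormedStarGroup A]
    (Φ : C(X, ℂ) →⋆ₐ[ℂ] 𝓜(ℂ, A))
    (hcentral : ∀ f : C(X, ℂ), Φ f ∈ Set.center 𝓜(ℂ, A))
    (a : A) (x : X) :
    infDist a (fibreIdeal Φ x) =
      sInf (Set.range fun f : C(X, ℂ) => ‖a - (Φ f).toProd.1 a + f x • a‖) :=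
  norm_fibre_eq_inf_general Φ a x
end
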